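/- arXiv:1909.10509 — 6 statements merged into one kernel-verified Lean document; each statement's English description precedes it below -/
import Mathlib

section
/- Let n, m, h ∈ ℕ with n a positive integer, and α a positive real. Let Θ_{m,α,h}(n) = {(θ_1,...,θ_n) ∈ {0,1,...,mh}^n : θ_1 + ... + θ_n ≤ αhn}. Then #Θ_{m,α,h}(n) ≤ (Λ_{m,α,h})^n, where Λ_{m,α,h} is the minimum over u ∈ (0,1] of u^{-αh}(1 + u + u^2 + ... + u^{mh}). -/
open Finset

/-- `G_{m,α,h}(u) = u^{-αh} (1 + u + u² + ⋯ + u^{mh})`. -/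
noncomputable def Gfun (m : ℕ) (α : ℝ) (h : ℕ) (u : ℝ) : ℝ :=
  u ^ (-(α * h)) * ∑ j ∈ Finset.range (m * h + 1), u ^ j

/-- `Λ_{m,α,h}`: the minimum (infimum) of `G_{m,α,h}` over `(0,1]`. -/
noncomputable def Lam (m : ℕ) (α : ℝ) (h : ℕ) : ℝ :=
  sInf (Gfun m α h '' Set.Ioc 0 1)

lemma Gfun_nonneg {m h : ℕ} {α : ℝ} {u : ℝ} (hu : u ∈ Set.Ioc (0:ℝ) 1) :
    0 ≤ Gfun m α h u := by
  obtain ⟨h0, _⟩ := hu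
  exact mul_nonneg (Real.rpow_nonneg h0.le _)
    (Finset.sum_nonneg fun j _ => pow_nonneg h0.le j)

lemma card_le_G {n m h : ℕ} (hn : 0 < n) {α : ℝ} (hα : 0 < α)
    (Θ : Finset (Fin n → Fin (m * h + 1)))
    (hΘ : ∀ θ ∈ Θ, (∑ i, ((θ i : ℕ) : ℝ)) ≤ α * h * n)
    {u : ℝ} (hu : u ∈ Set.Ioc (0:ℝ) 1) :
    (Θ.card : ℝ) ≤ (Gfun m α h u) ^ n := by
  obtain ⟨h0, h1⟩ := hu
  have hpow : (0:ℝ) < u ^ (α * h * n) := Real.rpow_pos_of_pos h0 _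
  have key : (Θ.card : ℝ) * u ^ (α * h * n)
      ≤ (∑ j ∈ Finset.range (m*h+1), u ^ j) ^ n := by
    calc (Θ.card : ℝ) * u ^ (α * h * n)
        = ∑ _θ ∈ Θ, u ^ (α * h * n) := by rw [Finset.sum_const, nsmul_eq_mul]
      _ ≤ ∑ θ ∈ Θ, ∏ i, u ^ (θ i : ℕ) := by
          apply Finset.sum_le_sum
          intro θ hθ
          have h2 : ∏ i, u ^ (θ i : ℕ) = u ^ (∑ i, (θ i : ℕ)) :=
            Finset.prod_pow_eq_pow_sum _ _ _
          have h3 : u ^ (∑ i, (θ i : ℕ)) = u ^ ((∑ i, (θ i : ℕ) : ℕ) : ℝ) :=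
            (Real.rpow_natCast u _).symm
          rw [h2, h3]
          apply Real.rpow_le_rpow_of_exponent_ge h0 h1
          have := hΘ θ hθ
          push_cast
          push_cast at this
          linarith
      _ ≤ ∑ θ ∈ (Finset.univ : Finset (Fin n → Fin (m*h+1))), ∏ i, u ^ (θ i : ℕ) :=
          Finset.sum_le_sum_of_subset_of_nonneg (Finset.subset_univ _)
            (fun θ _ _ => Finset.prod_nonneg fun i _ => pow_nonneg h0.le _)
      _ = ∏ _i : Fin n, (∑ v : Fin (m*h+1), u ^ (v : ℕ)) := by
          rw [Finset.prod_univ_sum, Fintype.piFinset_univ]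
      _ = (∑ j ∈ Finset.range (m*h+1), u ^ j) ^ n := by
          rw [Finset.prod_const, Finset.card_univ, Fintype.card_fin,
            Fin.sum_univ_eq_sum_range (fun j => u ^ j)]
  have hG : (Gfun m α h u) ^ n
      = (∑ j ∈ Finset.range (m*h+1), u ^ j) ^ n / u ^ (α * h * n) := by
    unfold Gfun
    rw [mul_pow]
    have : (u ^ (-(α * h))) ^ n = (u ^ (α * h * n))⁻¹ := by
      rw [← Real.rpow_natCast (u ^ (-(α * h))) n, ← Real.rpow_mul h0.le]
      rw [← Real.rpow_neg h0.le]
      ring_nf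
    rw [this]
    ring
  rw [hG, le_div_iff₀ hpow]
  exact key

/-- Any set of tuples `(θ₁,...,θ_n) ∈ {0,…,mh}^n` with `θ₁ + ⋯ + θ_n ≤ αhn` has
cardinality at most `Λ_{m,α,h}ⁿ`. -/
theorem card_theta_le {n m h : ℕ} (hn : 0 < n) {α : ℝ} (hα : 0 < α)
    (Θ : Finset (Fin n → Fin (m * h + 1)))
    (hΘ : ∀ θ ∈ Θ, (∑ i, ((θ i : ℕ) : ℝ)) ≤ α * h * n) :
    (Θ.card : ℝ) ≤ (Lam m α h) ^ n := by
  set c : ℝ := (Θ.card : ℝ) with hc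
  have hc0 : 0 ≤ c := Nat.cast_nonneg _
  have hne : (Gfun m α h '' Set.Ioc 0 1).Nonempty :=
    ⟨Gfun m α h 1, 1, by norm_num, rfl⟩
  have hroot : c ^ ((n:ℝ)⁻¹) ≤ Lam m α h := by
    apply le_csInf hne
    rintro b ⟨u, hu, rfl⟩
    have h1 : c ≤ (Gfun m α h u) ^ n := card_le_G hn hα Θ hΘ hu
    have hGn : 0 ≤ Gfun m α h u := Gfun_nonneg hu
    have h2 : c ^ ((n:ℝ)⁻¹) ≤ ((Gfun m α h u) ^ n) ^ ((n:ℝ)⁻¹) :=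
      Real.rpow_le_rpow hc0 h1 (by positivity)
    have h3 : ((Gfun m α h u) ^ n) ^ ((n:ℝ)⁻¹) = Gfun m α h u := by
      rw [← Real.rpow_natCast (Gfun m α h u) n, ← Real.rpow_mul hGn,
        mul_inv_cancel₀ (by exact_mod_cast hn.ne'), Real.rpow_one]
    rwa [h3] at h2
  have hL0 : 0 ≤ Lam m α h := le_trans (Real.rpow_nonneg hc0 _) hroot
  have : (c ^ ((n:ℝ)⁻¹)) ^ n ≤ (Lam m α h) ^ n :=
    pow_le_pow_left₀ (Real.rpow_nonneg hc0 _) hroot n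
  rwa [← Real.rpow_natCast (c ^ ((n:ℝ)⁻¹)) n, ← Real.rpow_mul hc0,
    inv_mul_cancel₀ (by exact_mod_cast hn.ne' : (n:ℝ) ≠ 0), Real.rpow_one] at this
end

section
/- Let m ∈ ℕ and β ∈ (0, 1/e]. Then there exists d_0 ≥ 2 such that for all integers d ≥ d_0, Λ_{m,β,d-1}/d < βe(1 − (1/2)e^{−m/β}), and in particular Λ_{m,β,d-1} < d. -/
open Finset

lemma Lam_le_Gfun (m : ℕ) (α : ℝ) (h : ℕ) {u : ℝ} (hu : u ∈ Set.Ioc (0:ℝ) 1) :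
    Lam m α h ≤ Gfun m α h u := by
  apply csInf_le
  · refine ⟨0, ?_⟩
    rintro _ ⟨v, hv, rfl⟩
    exact mul_nonneg (Real.rpow_nonneg hv.1.le _)
      (Finset.sum_nonneg fun j _ => pow_nonneg hv.1.le _)
  · exact ⟨u, hu, rfl⟩

set_option maxHeartbeats 1600000 in
/-- For `m ∈ ℕ` and `β ∈ (0, 1/e]`, for all sufficiently large `d`,
`Λ_{m,β,d-1}/d < βe(1 − (1/2)e^{−m/β})`, and in particular `Λ_{m,β,d-1} < d`. -/
theorem Lam_div_lt (m : ℕ) {β : ℝ} (hβ0 : 0 < β) (hβ : β ≤ 1 / Real.exp 1) :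
    ∃ d₀ : ℕ, 2 ≤ d₀ ∧ ∀ d : ℕ, d₀ ≤ d →
      Lam m β (d - 1) / d < β * Real.exp 1 * (1 - (1 / 2) * Real.exp (-(m / β))) ∧
      Lam m β (d - 1) < d := by
  set E : ℝ := Real.exp (-(m / β)) with hE
  clear_value E
  have hE0 : 0 < E := by rw [hE]; exact Real.exp_pos _
  have hE1 : E ≤ 1 := by
    rw [hE, Real.exp_le_one_iff]
    have : (0:ℝ) ≤ (m : ℝ) / β := div_nonneg (Nat.cast_nonneg m) hβ0.le
    linarith
  set c : ℝ := Real.log (1 + (1/2) * E) with hc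
  clear_value c
  have hc0 : 0 < c := by rw [hc]; exact Real.log_pos (by linarith)
  obtain ⟨N, hN⟩ := exists_nat_gt (1 / (β * c))
  refine ⟨max 2 (N + 1), le_max_left _ _, ?_⟩
  intro d hd
  have hd2 : 2 ≤ d := le_trans (le_max_left _ _) hd
  have hdN : N + 1 ≤ d := le_trans (le_max_right _ _) hd
  set h : ℕ := d - 1 with hh
  clear_value h
  have hh1 : 1 ≤ h := by omega
  have hhN : N ≤ h := by omega
  have hH0 : (0:ℝ) < (h:ℝ) := by exact_mod_cast hh1
  have hβH : 0 < β * (h:ℝ) := mul_pos hβ0 hH0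
  set x : ℝ := 1 / (β * (h:ℝ)) with hx
  clear_value x
  have hx0 : 0 < x := by rw [hx]; positivity
  set u : ℝ := Real.exp (-x) with hu
  clear_value u
  have hu0 : 0 < u := by rw [hu]; exact Real.exp_pos _
  have hu1 : u < 1 := by
    rw [hu, Real.exp_lt_one_iff]; linarith
  have hxβ : x * (β * (h:ℝ)) = 1 := by
    rw [hx]; field_simp
  -- the rpow factor equals e
  have hrpow : u ^ (-(β * (h:ℕ))) = Real.exp 1 := by
    rw [hu, ← Real.exp_mul]
    congr 1
    nlinarith [hxβ]
  -- power of u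
  have hupow : u ^ (m * h + 1) = E * Real.exp (-x) := by
    rw [hu, ← Real.exp_nat_mul, hE, ← Real.exp_add]
    congr 1
    have hne : (h:ℝ) ≠ 0 := ne_of_gt hH0
    push_cast
    rw [hx]
    field_simp
    ring
  -- exp x * u = 1
  have h2 : Real.exp x * u = 1 := by
    rw [hu, ← Real.exp_add]; simp
  -- geometric sum identity
  have hgeom : (∑ j ∈ Finset.range (m * h + 1), u ^ j) * (1 - u) = 1 - u ^ (m * h + 1) := by
    have := geom_sum_mul u (m * h + 1)
    nlinarith [this]
  have h1u : x * u ≤ 1 - u := by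
    have h1 : x + 1 ≤ Real.exp x := Real.add_one_le_exp x
    nlinarith [mul_le_mul_of_nonneg_right h1 hu0.le, h2]
  have h1u0 : 0 < 1 - u := by nlinarith
  have hS0 : 0 ≤ ∑ j ∈ Finset.range (m * h + 1), u ^ j :=
    Finset.sum_nonneg fun j _ => pow_nonneg hu0.le _
  have hxu0 : (0:ℝ) < x * u := mul_pos hx0 hu0
  have hSle : (∑ j ∈ Finset.range (m * h + 1), u ^ j) ≤ (1 - u ^ (m * h + 1)) / (x * u) := by
    rw [le_div_iff₀ hxu0, ← hgeom]
    exact mul_le_mul_of_nonneg_left h1u hS0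
  -- key bound on Gfun
  have hG : Gfun m β h u ≤ β * (h:ℝ) * Real.exp 1 * (Real.exp x - E) := by
    have hGeq : Gfun m β h u = Real.exp 1 * ∑ j ∈ Finset.range (m * h + 1), u ^ j := by
      rw [Gfun, hrpow]
    rw [hGeq]
    have step : (1 - u ^ (m * h + 1)) / (x * u) = β * (h:ℝ) * (Real.exp x - E) := by
      rw [hupow]
      rw [div_eq_iff (ne_of_gt hxu0)]
      linear_combination (-(Real.exp x - E) * u) * hxβ - h2 + E * hu
    calc Real.exp 1 * ∑ j ∈ Finset.range (m * h + 1), u ^ j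
        ≤ Real.exp 1 * ((1 - u ^ (m * h + 1)) / (x * u)) := by
          exact mul_le_mul_of_nonneg_left hSle (Real.exp_pos 1).le
      _ = β * (h:ℝ) * Real.exp 1 * (Real.exp x - E) := by rw [step]; ring
  -- x < c
  have hxc : x < c := by
    have hNc : 1 / (β * c) < (h:ℝ) := lt_of_lt_of_le hN (by exact_mod_cast hhN)
    rw [hx, div_lt_iff₀ hβH]
    rw [div_lt_iff₀ (mul_pos hβ0 hc0)] at hNc
    exact hNc.trans_eq (by ring)
  have hex : Real.exp x < 1 + (1/2) * E := by
    have hlt := Real.exp_lt_exp.mpr hxc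
    rwa [hc, Real.exp_log (by linarith)] at hlt
  have hfac : Real.exp x - E < 1 - (1/2) * E := by linarith
  have hfac0 : 0 < Real.exp x - E := by
    have := Real.add_one_le_exp x
    linarith
  have hd0 : (0:ℝ) < (d:ℝ) := by exact_mod_cast (by omega : 0 < d)
  have hhd : (h:ℝ) < (d:ℝ) := by exact_mod_cast (by omega : h < d)
  -- Lam ≤ Gfun u
  have hLam : Lam m β h ≤ Gfun m β h u := Lam_le_Gfun m β h ⟨hu0, hu1.le⟩
  have hmain : Lam m β h / d < β * Real.exp 1 * (1 - (1/2) * E) := by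
    have hP0 : (0:ℝ) < β * Real.exp 1 * (Real.exp x - E) :=
      mul_pos (mul_pos hβ0 (Real.exp_pos 1)) hfac0
    have hq1 : Lam m β h / d ≤ β * (h:ℝ) * Real.exp 1 * (Real.exp x - E) / d := by
      gcongr
      exact le_trans hLam hG
    have hq2 : β * (h:ℝ) * Real.exp 1 * (Real.exp x - E) / d
        < β * Real.exp 1 * (Real.exp x - E) := by
      rw [div_lt_iff₀ hd0]
      nlinarith [mul_lt_mul_of_pos_left hhd hP0]
    have hq3 : β * Real.exp 1 * (Real.exp x - E) < β * Real.exp 1 * (1 - (1/2) * E) :=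
      mul_lt_mul_of_pos_left hfac (mul_pos hβ0 (Real.exp_pos 1))
    linarith
  have hC1 : β * Real.exp 1 * (1 - (1/2) * E) < 1 := by
    have hβe : β * Real.exp 1 ≤ 1 := by
      rw [div_eq_inv_mul, mul_one] at hβ
      calc β * Real.exp 1 ≤ (Real.exp 1)⁻¹ * Real.exp 1 :=
            mul_le_mul_of_nonneg_right hβ (Real.exp_pos 1).le
        _ = 1 := inv_mul_cancel₀ (ne_of_gt (Real.exp_pos 1))
    nlinarith [mul_pos hβ0 (Real.exp_pos 1)]
  refine ⟨hmain, ?_⟩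
  have hlt1 : Lam m β h / d < 1 := lt_trans hmain hC1
  calc Lam m β h = Lam m β h / d * d := (div_mul_cancel₀ _ (ne_of_gt hd0)).symm
    _ < 1 * d := mul_lt_mul_of_pos_right hlt1 hd0
    _ = d := one_mul _
end

section
/- Let S be a balanced, dominant, and irreducible system of L ℤ-linear equations in r variables. Then for every n ≥ 2 and k ≥ 1, there exists Y ⊆ {0,1,...,k}^n ⊆ ℤ^n with #Y ≥ (k+1)^n/(n k^2) such that every solution (y_1,...,y_r) ∈ Y^r of the system S satisfies y_1 = y_2 = ... = y_r. -/
/-- An equation with integer coefficients `c` is dominant: some coefficient is positive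
(resp. negative) and all others are `≤ 0` (resp. `≥ 0`). -/
def DominantEquation {r : ℕ} (c : Fin r → ℤ) : Prop :=
  ∃ j : Fin r, (0 < c j ∧ ∀ i, i ≠ j → c i ≤ 0) ∨ (c j < 0 ∧ ∀ i, i ≠ j → 0 ≤ c i)

lemma expand_aux {r : ℕ} (a x : Fin r → ℤ) :
    ∑ i, ∑ i', a i * a i' * (x i - x i')^2
    = 2 * (∑ i, a i) * (∑ i, a i * x i^2) - 2 * (∑ i, a i * x i)^2 := by
  have h : ∀ i i', a i * a i' * (x i - x i')^2
      = ((a i * x i^2) * a i' + a i * (a i' * x i'^2)) - 2 * ((a i * x i) * (a i' * x i')) := by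
    intros; ring
  simp_rw [h]
  simp only [Finset.sum_sub_distrib, Finset.sum_add_distrib, ← Finset.mul_sum, ← Finset.sum_mul]
  ring

lemma sum_ite_neg {r : ℕ} (c x : Fin r → ℤ) (j : Fin r) :
    ∑ i, (if i = j then 0 else -c i) * x i = c j * x j - ∑ i, c i * x i := by
  have h0 : ∀ i, (if i = j then 0 else -c i) * x i
      = (if i = j then c i * x i else 0) - c i * x i := by
    intro i; split_ifs with h
    · subst h; ring
    · ring
  simp_rw [h0, Finset.sum_sub_distrib, Finset.sum_ite_eq' Finset.univ j (fun i => c i * x i),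
    Finset.mem_univ, if_pos]

lemma key_pos {r n : ℕ} (c : Fin r → ℤ) (j : Fin r) (hj : 0 < c j)
    (hneg : ∀ i, i ≠ j → c i ≤ 0) (hc : ∑ i, c i = 0)
    (y : Fin r → Fin n → ℤ) (m : ℤ) (hm : ∀ i, ∑ t, (y i t)^2 = m)
    (heq : ∑ i, c i • y i = 0) :
    ∀ i, c i ≠ 0 → y i = y j := by
  set a : Fin r → ℤ := fun i => if i = j then 0 else -c i with ha_def
  have ha : ∀ i, 0 ≤ a i := by
    intro i; by_cases h : i = j
    · simp [ha_def, h]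
    · simp only [ha_def, if_neg h]
      exact neg_nonneg.mpr (hneg i h)
  have hA : ∑ i, a i = c j := by
    have := sum_ite_neg c (fun _ => 1) j
    simpa [hc] using this
  have hw : ∀ t, ∑ i, a i * y i t = c j * y j t := by
    intro t
    have hct : ∑ i, c i * y i t = 0 := by
      have := congrFun heq t
      simpa [Finset.sum_apply] using this
    have h3 := sum_ite_neg c (fun i => y i t) j
    rw [hct, sub_zero] at h3
    exact h3
  have hT : ∑ i, ∑ i', a i * a i' * (∑ t, (y i t - y i' t)^2) = 0 := by
    have swap : ∑ i, ∑ i', a i * a i' * (∑ t, (y i t - y i' t)^2)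
        = ∑ t, ∑ i, ∑ i', a i * a i' * (y i t - y i' t)^2 := by
      simp_rw [Finset.mul_sum]
      have e1 : ∀ i : Fin r, (∑ i', ∑ t, a i * a i' * (y i t - y i' t)^2)
          = ∑ t, ∑ i', a i * a i' * (y i t - y i' t)^2 := fun i => Finset.sum_comm
      simp_rw [e1]
      exact Finset.sum_comm
    rw [swap]
    have h1 : ∑ t, ∑ i, a i * (y i t)^2 = c j * m := by
      rw [Finset.sum_comm]
      simp_rw [← Finset.mul_sum, hm, ← Finset.sum_mul, hA]
    calc ∑ t, ∑ i, ∑ i', a i * a i' * (y i t - y i' t)^2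
        = ∑ t, (2 * (∑ i, a i) * (∑ i, a i * (y i t)^2) - 2 * (∑ i, a i * y i t)^2) :=
          Finset.sum_congr rfl fun t _ => expand_aux a (fun i => y i t)
      _ = ∑ t, (2 * c j * (∑ i, a i * (y i t)^2) - 2 * c j ^2 * (y j t)^2) := by
          refine Finset.sum_congr rfl fun t _ => ?_
          rw [hA, hw t]; ring
      _ = 2 * c j * (∑ t, ∑ i, a i * (y i t)^2) - 2 * c j^2 * (∑ t, (y j t)^2) := by
          rw [Finset.sum_sub_distrib, ← Finset.mul_sum, ← Finset.mul_sum]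
      _ = 0 := by rw [h1, hm j]; ring
  have hterm : ∀ i, ∀ i', a i * a i' * (∑ t, (y i t - y i' t)^2) = 0 := by
    have houter := (Finset.sum_eq_zero_iff_of_nonneg (fun i _ => Finset.sum_nonneg
      (fun i' _ => mul_nonneg (mul_nonneg (ha i) (ha i'))
        (Finset.sum_nonneg fun t _ => sq_nonneg _)))).mp hT
    intro i i'
    exact (Finset.sum_eq_zero_iff_of_nonneg (fun i' _ => mul_nonneg (mul_nonneg (ha i) (ha i'))
        (Finset.sum_nonneg fun t _ => sq_nonneg _))).mp (houter i (Finset.mem_univ i)) i'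
        (Finset.mem_univ i')
  have key2 : ∀ i i', 0 < a i → 0 < a i' → y i = y i' := by
    intro i i' hi hi'
    have h0 : (∑ t, (y i t - y i' t)^2) = 0 := by
      have := hterm i i'
      have hpos : a i * a i' ≠ 0 := by positivity
      exact (mul_eq_zero.mp this).resolve_left hpos
    funext t
    have := (Finset.sum_eq_zero_iff_of_nonneg (fun t _ => sq_nonneg _)).mp h0 t (Finset.mem_univ t)
    have := pow_eq_zero_iff (n := 2) (by norm_num) |>.mp this
    linarith [sub_eq_zero.mp this]
  obtain ⟨i₀, hi₀⟩ : ∃ i₀, 0 < a i₀ := by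
    by_contra h
    push_neg at h
    have : ∑ i, a i = 0 := Finset.sum_eq_zero fun i _ => le_antisymm (h i) (ha i)
    rw [hA] at this; omega
  have hji : y j = y i₀ := by
    funext t
    have h1 : ∑ i, a i * y i t = (∑ i, a i) * y i₀ t := by
      rw [Finset.sum_mul]
      refine Finset.sum_congr rfl fun i _ => ?_
      rcases (ha i).lt_or_eq with h | h
      · rw [key2 i i₀ h hi₀]
      · rw [← h]; ring
    have h2 : c j * y j t = c j * y i₀ t := by rw [← hw t, h1, hA]
    exact mul_left_cancel₀ (ne_of_gt hj) h2
  intro i hci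
  by_cases h : i = j
  · rw [h]
  · have hai : 0 < a i := by
      simp only [ha_def, if_neg h]
      have := hneg i h
      omega
    rw [key2 i i₀ hai hi₀, hji]

lemma key {r n : ℕ} (c : Fin r → ℤ) (hd : DominantEquation c) (hc : ∑ i, c i = 0)
    (y : Fin r → Fin n → ℤ) (m : ℤ) (hm : ∀ i, ∑ t, (y i t)^2 = m)
    (heq : ∑ i, c i • y i = 0) :
    ∀ i i', c i ≠ 0 → c i' ≠ 0 → y i = y i' := by
  obtain ⟨j, h | h⟩ := hd
  · intro i i' hi hi'
    rw [key_pos c j h.1 h.2 hc y m hm heq i hi, key_pos c j h.1 h.2 hc y m hm heq i' hi']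
  · have h1 : ∑ i, (fun i => -c i) i = 0 := by simp [hc]
    have h2 : ∑ i, (fun i => -c i) i • y i = 0 := by
      have e : ∑ i, (fun i => -c i) i • y i = -∑ i, c i • y i := by
        rw [← Finset.sum_neg_distrib]
        exact Finset.sum_congr rfl fun i _ => by simp [neg_smul]
      rw [e, heq, neg_zero]
    intro i i' hi hi'
    have hj : 0 < (fun i => -c i) j := by simpa using h.1
    have hneg : ∀ i, i ≠ j → (fun i => -c i) i ≤ 0 := fun i hij => by simpa using h.2 i hij
    rw [key_pos _ j hj hneg h1 y m hm h2 i (by simpa using hi),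
      key_pos _ j hj hneg h1 y m hm h2 i' (by simpa using hi')]

lemma exists_level_set (n k : ℕ) (hn : 2 ≤ n) (hk : 1 ≤ k) :
    ∃ (Y : Finset (Fin n → ℤ)) (m : ℤ),
      (∀ y ∈ Y, ∀ t, y t ∈ Finset.Icc (0:ℤ) k) ∧
      (∀ y ∈ Y, ∑ t, (y t)^2 = m) ∧
      (k+1)^n ≤ n * k^2 * Y.card := by
  classical
  set B : Finset (Fin n → ℤ) := Fintype.piFinset (fun _ => Finset.Icc (0:ℤ) k) with hB
  have memB : ∀ y : Fin n → ℤ, y ∈ B ↔ ∀ t, y t ∈ Finset.Icc (0:ℤ) k := fun y =>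
    Fintype.mem_piFinset
  have hBcard : B.card = (k+1)^n := by
    rw [hB, Fintype.card_piFinset]
    simp [Int.card_Icc]
  set f : (Fin n → ℤ) → ℤ := fun y => ∑ t, (y t)^2 with hf
  have fbound : ∀ y ∈ B, (0:ℤ) ≤ f y := by
    intro y _
    exact Finset.sum_nonneg fun t _ => sq_nonneg _
  rcases lt_or_ge ((k+1)^n) (2*(n*k^2)) with hcase | hcase
  · -- small case
    refine ⟨B.filter (fun y => f y = (k:ℤ)^2), (k:ℤ)^2, ?_, ?_, ?_⟩
    · intro y hy
      exact (memB y).mp (Finset.mem_filter.mp hy).1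
    · intro y hy
      exact (Finset.mem_filter.mp hy).2
    · have hv : ∀ t0 : Fin n, (fun t => if t = t0 then (k:ℤ) else 0) ∈
          B.filter (fun y => f y = (k:ℤ)^2) := by
        intro t0
        rw [Finset.mem_filter]
        constructor
        · rw [memB]
          intro t
          by_cases h : t = t0
          · simp only [if_pos h, Finset.mem_Icc]; omega
          · simp only [if_neg h, Finset.mem_Icc]; omega
        · simp only [hf]
          rw [Finset.sum_eq_single t0 (fun t _ ht => by simp [ht])
            (fun h => absurd (Finset.mem_univ t0) h)]
          simp
      have hne : (fun t => if t = (⟨0, by omega⟩ : Fin n) then (k:ℤ) else 0)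
          ≠ (fun t => if t = (⟨1, by omega⟩ : Fin n) then (k:ℤ) else 0) := by
        intro h
        have := congrFun h ⟨0, by omega⟩
        simp only [Fin.ext_iff] at this
        norm_num at this
        omega
      have h2 : 2 ≤ (B.filter (fun y => f y = (k:ℤ)^2)).card := by
        rw [← Nat.lt_iff_add_one_le]
        exact Finset.one_lt_card.mpr ⟨_, hv ⟨0, by omega⟩, _, hv ⟨1, by omega⟩, hne⟩
      nlinarith [h2, hcase]
  · -- pigeonhole case
    set vK : Fin n → ℤ := fun _ => (k:ℤ) with hvK
    have hKB : vK ∈ B := by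
      rw [memB]; intro t; simp only [hvK, Finset.mem_Icc]; omega
    have h0B : (0 : Fin n → ℤ) ∈ B := by
      rw [memB]; intro t; simp only [Pi.zero_apply, Finset.mem_Icc]; omega
    have h0K : (0 : Fin n → ℤ) ≠ vK := by
      intro h
      have := congrFun h ⟨0, by omega⟩
      simp only [hvK, Pi.zero_apply] at this
      omega
    set s := (B.erase vK).erase 0 with hs
    have hscard : s.card = (k+1)^n - 2 := by
      rw [hs, Finset.card_erase_of_mem (Finset.mem_erase.mpr ⟨h0K, h0B⟩),
        Finset.card_erase_of_mem hKB, hBcard]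
      omega
    set T : Finset ℤ := Finset.Icc 1 ((n:ℤ)*k^2 - 1) with hT
    have hD2 : 2 ≤ n * k^2 := by
      have hk2 : 1 ≤ k^2 := Nat.one_le_pow 2 k (by omega)
      nlinarith
    have hTcard : T.card = n*k^2 - 1 := by
      rw [hT, Int.card_Icc]
      have h1 : ((n:ℤ)*(k:ℤ)^2 - 1 + 1 - 1) = ((n*k^2 : ℕ) : ℤ) - 1 := by push_cast; ring
      rw [h1]
      omega
    have maps : ∀ y ∈ s, f y ∈ T := by
      intro y hy
      rw [hs, Finset.mem_erase, Finset.mem_erase] at hy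
      obtain ⟨hy0, hyK, hyB⟩ := hy
      have hyc : ∀ t, 0 ≤ y t ∧ y t ≤ (k:ℤ) := by
        intro t
        have := (memB y).mp hyB t
        rw [Finset.mem_Icc] at this
        exact this
      rw [hT, Finset.mem_Icc]
      constructor
      · -- 1 ≤ f y
        have hne : f y ≠ 0 := by
          intro h
          apply hy0
          funext t
          have h1 := (Finset.sum_eq_zero_iff_of_nonneg (fun t _ => sq_nonneg (y t))).mp h t
            (Finset.mem_univ t)
          have := pow_eq_zero_iff (n := 2) (by norm_num) |>.mp h1
          simpa using this
        have := fbound y hyB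
        omega
      · -- f y ≤ n k² - 1
        obtain ⟨t0, ht0⟩ := Function.ne_iff.mp hyK
        have hle : f y ≤ ∑ t, ((if t = t0 then ((k:ℤ)-1)^2 - (k:ℤ)^2 else 0) + (k:ℤ)^2) := by
          apply Finset.sum_le_sum
          intro t _
          by_cases h : t = t0
          · rw [if_pos h]
            subst h
            have h1 := hyc t
            have h2 : y t ≤ (k:ℤ) - 1 := by
              have : y t ≠ (k:ℤ) := by simpa [hvK] using ht0
              omega
            nlinarith [h1.1, h2]
          · rw [if_neg h]
            have h1 := hyc t
            nlinarith [h1.1, h1.2]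
        rw [Finset.sum_add_distrib, Finset.sum_ite_eq' Finset.univ t0, if_pos (Finset.mem_univ t0),
          Finset.sum_const, Finset.card_univ, Fintype.card_fin, nsmul_eq_mul] at hle
        have hk1 : (1:ℤ) ≤ (k:ℤ) := by exact_mod_cast hk
        have : f y ≤ (n:ℤ) * (k:ℤ)^2 - (2*(k:ℤ) - 1) := by
          nlinarith [hle]
        omega
    have hTne : T.Nonempty := by
      rw [hT]
      apply Finset.nonempty_Icc.mpr
      have : (2:ℤ) ≤ (n:ℤ)*(k:ℤ)^2 := by exact_mod_cast hD2
      omega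
    obtain ⟨m, hmT, hmax⟩ := Finset.exists_max_image T
      (fun m => (s.filter (fun y => f y = m)).card) hTne
    set c := (s.filter (fun y => f y = m)).card with hc
    have hsum : s.card = ∑ m' ∈ T, (s.filter (fun y => f y = m')).card :=
      Finset.card_eq_sum_card_fiberwise maps
    have hle : s.card ≤ T.card * c := by
      rw [hsum]
      calc ∑ m' ∈ T, (s.filter (fun y => f y = m')).card ≤ ∑ _m' ∈ T, c :=
            Finset.sum_le_sum fun x hx => hmax x hx
        _ = T.card * c := by rw [Finset.sum_const, smul_eq_mul]
    -- arithmetic: (k+1)^n ≤ n k² * c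
    have hNc : (k+1)^n ≤ n * k^2 * c := by
      set N := (k+1)^n with hN
      set D := n * k^2 with hD
      have h1 : N - 2 ≤ (D - 1) * c := by
        rw [← hscard, ← hTcard]; exact hle
      have hN2 : 2 * D ≤ N := hcase
      have hDD : 2 ≤ D := hD2
      have h2c : 2 ≤ c := by
        refine Nat.le_of_mul_le_mul_left ?_ (show 0 < D - 1 by omega)
        calc (D - 1) * 2 ≤ N - 2 := by omega
          _ ≤ (D - 1) * c := h1
      have h3 : D * c = (D - 1) * c + c := by
        have hD1 : D - 1 + 1 = D := by omega
        calc D * c = ((D - 1) + 1) * c := by rw [hD1]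
          _ = (D - 1) * c + c := by ring
      omega
    exact ⟨s.filter (fun y => f y = m), m,
      fun y hy => (memB y).mp (Finset.mem_erase.mp (Finset.mem_erase.mp
        (Finset.mem_filter.mp hy).1).2).2,
      fun y hy => (Finset.mem_filter.mp hy).2, hNc⟩


/-- For a balanced, dominant, irreducible system of `ℤ`-linear equations in `r` variables,
for every `n ≥ 2` and `k ≥ 1` there is `Y ⊆ {0,…,k}^n ⊆ ℤ^n` of size at least
`(k+1)^n/(nk²)` in which every solution of the system is constant. -/
theorem exists_stronglyFree_int {L r : ℕ} (b : Fin L → Fin r → ℤ)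
    (hbal : ∀ l, ∑ i, b l i = 0)
    (hdom : ∀ l, DominantEquation (b l))
    (hocc : ∀ i : Fin r, ∃ l, b l i ≠ 0)
    (hconn : ∀ i j : Fin r,
      Relation.ReflTransGen (fun i' j' : Fin r => ∃ l, b l i' ≠ 0 ∧ b l j' ≠ 0) i j)
    {n k : ℕ} (hn : 2 ≤ n) (hk : 1 ≤ k) :
    ∃ Y : Finset (Fin n → ℤ),
      (∀ y ∈ Y, ∀ i, y i ∈ Finset.Icc (0 : ℤ) k) ∧
      ((k + 1 : ℝ) ^ n / (n * k ^ 2) ≤ (Y.card : ℝ)) ∧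
      ∀ y : Fin r → (Fin n → ℤ), (∀ i, y i ∈ Y) →
        (∀ l, ∑ i, b l i • y i = 0) → ∀ i j, y i = y j := by
  obtain ⟨Y, m, hbox, hlev, hcard⟩ := exists_level_set n k hn hk
  refine ⟨Y, hbox, ?_, ?_⟩
  · have hk1 : (1:ℝ) ≤ (k:ℝ) := by exact_mod_cast hk
    have hn2 : (2:ℝ) ≤ (n:ℝ) := by exact_mod_cast hn
    have hpos : (0:ℝ) < (n:ℝ) * (k:ℝ)^2 := by nlinarith
    rw [div_le_iff₀ hpos]
    have : ((k+1)^n : ℝ) ≤ ((n * k^2 * Y.card : ℕ) : ℝ) := by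
      exact_mod_cast hcard
    push_cast at this
    nlinarith [this]
  · intro y hyY hsol i j
    have edge : ∀ p q : Fin r, (∃ l, b l p ≠ 0 ∧ b l q ≠ 0) → y p = y q := by
      rintro p q ⟨l, hp, hq⟩
      exact key (b l) (hdom l) (hbal l) y m (fun i => hlev (y i) (hyY i)) (hsol l) p q hp hq
    have h := hconn i j
    induction h with
    | refl => rfl
    | tail _ hstep ih => exact ih.trans (edge _ _ hstep)
end

section
/- Let p ≥ 3 be prime. The equation x_1 − 2x_3 + x_5 = 0 over ℤ is dominant with dominant coefficient 2; consequently, for every prime p ≥ 3 and all sufficiently large n (depending on p), there exists a subset A ⊆ 𝔽_p^n with #A ≥ (p/2)^n containing no five distinct points x_1,...,x_5 satisfying both x_1 − x_2 − x_3 + x_4 = 0 and x_1 − 2x_3 + x_5 = 0 in 𝔽_p^n. -/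
/-- The coefficient vector of the equation `x₁ − 2x₃ + x₅ = 0`. -/
def cW : Fin 5 → ℤ := ![1, 0, -2, 0, 1]

/-- Exponentials with base `> 1` eventually dominate linear functions. -/
lemma exp_beats_linear (q c : ℝ) (hq : 1 < q) :
    ∃ n₀ : ℕ, ∀ n, n₀ ≤ n → c * n + 2 ≤ q ^ n := by
  have hq0 : (0:ℝ) < q := lt_trans one_pos hq
  set r : ℝ := q⁻¹ with hr
  have hr0 : 0 < r := inv_pos.2 hq0
  have hrlt : ‖r‖ < 1 := by
    rw [Real.norm_eq_abs, abs_of_pos hr0]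
    exact inv_lt_one_of_one_lt₀ hq
  have hsum : Summable (fun n : ℕ => (n : ℝ) ^ 1 * r ^ n) :=
    summable_pow_mul_geometric_of_norm_lt_one 1 hrlt
  have h1 : Filter.Tendsto (fun n : ℕ => (n : ℝ) ^ 1 * r ^ n) Filter.atTop (nhds 0) :=
    hsum.tendsto_atTop_zero
  have h2 : Filter.Tendsto (fun n : ℕ => r ^ n) Filter.atTop (nhds 0) :=
    tendsto_pow_atTop_nhds_zero_of_norm_lt_one hrlt
  have h3 : Filter.Tendsto (fun n : ℕ => (c * n + 2) * r ^ n) Filter.atTop (nhds 0) := by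
    have := (h1.const_mul c).add (h2.const_mul 2)
    simp only [mul_zero, add_zero] at this
    convert this using 2 with n
    ring
  have h4 : ∀ᶠ n : ℕ in Filter.atTop, (c * n + 2) * r ^ n < 1 :=
    h3.eventually_lt_const one_pos
  obtain ⟨n₀, hn₀⟩ := Filter.eventually_atTop.1 h4
  refine ⟨n₀, fun n hn => ?_⟩
  have h5 := hn₀ n hn
  have hqn : (0:ℝ) < q ^ n := pow_pos hq0 n
  have hrq : r ^ n = (q ^ n)⁻¹ := by rw [hr, inv_pow]
  rw [hrq] at h5
  calc c * n + 2 = (c * n + 2) * (q ^ n)⁻¹ * q ^ n := by field_simp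
    _ ≤ 1 * q ^ n := by nlinarith
    _ = q ^ n := one_mul _

/-- Key convexity step: three points of `{0,…,k}ⁿ` lying on a common sphere and
satisfying `x₁ − 2x₃ + x₅ = 0 mod p` (with `p = 2k+1`) must satisfy `x₁ = x₃`. -/
lemma free_aux {p k n : ℕ} [NeZero p] (hk : p = 2 * k + 1)
    (a0 a2 a4 : Fin n → Fin (k + 1))
    (hc : ∀ i : Fin n, ((a0 i : ℕ) : ZMod p) - 2 * ((a2 i : ℕ) : ZMod p)
      + ((a4 i : ℕ) : ZMod p) = 0)
    (h02 : ∑ i, (a0 i : ℕ) ^ 2 = ∑ i, (a2 i : ℕ) ^ 2)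
    (h42 : ∑ i, (a4 i : ℕ) ^ 2 = ∑ i, (a2 i : ℕ) ^ 2) :
    a0 = a2 := by
  have hcw : ∀ i : Fin n, (a0 i : ℕ) + (a4 i : ℕ) = 2 * (a2 i : ℕ) := by
    intro i
    have h := hc i
    have hcast : (((a0 i : ℕ) + (a4 i : ℕ) : ℕ) : ZMod p) = ((2 * (a2 i : ℕ) : ℕ) : ZMod p) := by
      push_cast
      linear_combination h
    have hb0 : (a0 i : ℕ) ≤ k := Nat.lt_succ_iff.1 (a0 i).isLt
    have hb2 : (a2 i : ℕ) ≤ k := Nat.lt_succ_iff.1 (a2 i).isLt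
    have hb4 : (a4 i : ℕ) ≤ k := Nat.lt_succ_iff.1 (a4 i).isLt
    have := congrArg ZMod.val hcast
    rwa [ZMod.val_natCast_of_lt (by omega), ZMod.val_natCast_of_lt (by omega)] at this
  have hsum : ∑ i, (2 * (a2 i : ℤ) ^ 2) = ∑ i, ((a0 i : ℤ) ^ 2 + (a4 i : ℤ) ^ 2) := by
    have h1 : ((∑ i, (a0 i : ℕ) ^ 2 : ℕ) : ℤ) + ((∑ i, (a4 i : ℕ) ^ 2 : ℕ) : ℤ)
        = 2 * ((∑ i, (a2 i : ℕ) ^ 2 : ℕ) : ℤ) := by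
      rw [h02, h42]; ring
    push_cast at h1
    rw [← Finset.mul_sum, Finset.sum_add_distrib]
    exact h1.symm
  have hle : ∀ i ∈ (Finset.univ : Finset (Fin n)),
      2 * (a2 i : ℤ) ^ 2 ≤ (a0 i : ℤ) ^ 2 + (a4 i : ℤ) ^ 2 := by
    intro i _
    have h' : (a0 i : ℤ) + (a4 i : ℤ) = 2 * (a2 i : ℤ) := by exact_mod_cast hcw i
    nlinarith [sq_nonneg ((a0 i : ℤ) - (a4 i : ℤ))]
  have heach := (Finset.sum_eq_sum_iff_of_le hle).1 hsum
  funext i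
  have h := heach i (Finset.mem_univ i)
  have h' : (a0 i : ℤ) + (a4 i : ℤ) = 2 * (a2 i : ℤ) := by exact_mod_cast hcw i
  have hv : (a0 i : ℤ) = (a2 i : ℤ) := by nlinarith [sq_nonneg ((a0 i : ℤ) - (a2 i : ℤ))]
  exact Fin.ext (by exact_mod_cast hv)

/-- The equation `x₁ − 2x₃ + x₅ = 0` is dominant with dominant coefficient `2`;
consequently for every prime `p ≥ 3` and all large `n` there is `A ⊆ 𝔽_p^n` with
`#A ≥ (p/2)ⁿ` containing no five distinct points solving
`x₁ − x₂ − x₃ + x₄ = 0` and `x₁ − 2x₃ + x₅ = 0`. -/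
theorem weaklyWfree_lower_bound :
    (∃ j : Fin 5, cW j < 0 ∧ (∀ i, i ≠ j → 0 ≤ cW i) ∧ (cW j).natAbs = 2) ∧
    ∀ p : ℕ, p.Prime → 3 ≤ p → ∃ n₀ : ℕ, ∀ n, n₀ ≤ n →
      ∃ A : Finset (Fin n → ZMod p),
        ((p : ℝ) / 2) ^ n ≤ (A.card : ℝ) ∧
        ¬∃ x : Fin 5 → (Fin n → ZMod p), (∀ i, x i ∈ A) ∧
          (∀ i j, i ≠ j → x i ≠ x j) ∧
          x 0 - x 1 - x 2 + x 3 = 0 ∧ x 0 - 2 • x 2 + x 4 = 0 := by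
  constructor
  · exact ⟨2, by decide, by decide, by decide⟩
  intro p hp hp3
  haveI : Fact p.Prime := ⟨hp⟩
  obtain ⟨k, hk⟩ : Odd p := hp.odd_of_ne_two (by omega)
  have hk1 : 1 ≤ k := by omega
  have hp0 : (0:ℝ) < p := by
    have : (3:ℝ) ≤ p := by exact_mod_cast hp3
    linarith
  have hq1 : (1:ℝ) < ((p:ℝ) + 1) / p := by
    rw [lt_div_iff₀ hp0]; linarith
  obtain ⟨n₀, hn₀⟩ := exp_beats_linear (((p:ℝ) + 1) / p) (2 * (k:ℝ) ^ 2) hq1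
  refine ⟨n₀, fun n hn => ?_⟩
  have hmp : k + 1 ≤ p := by omega
  -- the embedding of the cube and the squared norm
  have hembinj : Function.Injective
      (fun (a : Fin n → Fin (k+1)) (i : Fin n) => ((a i : ℕ) : ZMod p)) := by
    intro a b hab
    funext i
    have h := congrFun hab i
    have hva : ((a i : ℕ) : ZMod p).val = (a i : ℕ) :=
      ZMod.val_natCast_of_lt (lt_of_lt_of_le (a i).isLt hmp)
    have hvb : ((b i : ℕ) : ZMod p).val = (b i : ℕ) :=
      ZMod.val_natCast_of_lt (lt_of_lt_of_le (b i).isLt hmp)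
    have hv := congrArg ZMod.val h
    rw [hva, hvb] at hv
    exact Fin.ext hv
  set T : ℕ := n * k ^ 2 + 1 with hT
  have hTpos : 0 < T := by omega
  have hmaps : ∀ a : Fin n → Fin (k+1), a ∈ (Finset.univ : Finset (Fin n → Fin (k+1))) →
      (∑ i, (a i : ℕ) ^ 2) ∈ Finset.range T := by
    intro a _
    rw [Finset.mem_range, hT]
    have h1 : (∑ i, (a i : ℕ) ^ 2) ≤ ∑ _i : Fin n, k ^ 2 := by
      apply Finset.sum_le_sum
      intro i _
      exact Nat.pow_le_pow_left (Nat.lt_succ_iff.1 (a i).isLt) 2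
    simp only [Finset.sum_const, Finset.card_univ, Fintype.card_fin, smul_eq_mul] at h1
    omega
  have hcardfun : (Finset.univ : Finset (Fin n → Fin (k+1))).card = (k+1) ^ n := by
    simp [Finset.card_univ]
  set b : ℕ := (k+1) ^ n / T with hb
  obtain ⟨r, -, hr⟩ := Finset.exists_le_card_fiber_of_mul_le_card_of_maps_to
    (n := b) hmaps ⟨0, Finset.mem_range.2 (by omega)⟩
    (by
      rw [Finset.card_range, hcardfun, hb, Nat.mul_comm]
      exact Nat.div_mul_le_self _ _)
  refine ⟨(Finset.univ.filter fun a : Fin n → Fin (k+1) => (∑ i, (a i : ℕ) ^ 2) = r).image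
    (fun a i => ((a i : ℕ) : ZMod p)), ?_, ?_⟩
  · -- cardinality bound
    rw [Finset.card_image_of_injective _ hembinj]
    have hbf : b ≤ (Finset.univ.filter
        fun a : Fin n → Fin (k+1) => (∑ i, (a i : ℕ) ^ 2) = r).card := hr
    have hpow1 : (1:ℝ) ≤ ((p:ℝ) / 2) ^ n := one_le_pow₀ (by
      rw [le_div_iff₀ (by norm_num : (0:ℝ) < 2)]
      have : (3:ℝ) ≤ p := by exact_mod_cast hp3
      linarith)
    have hexp := hn₀ n hn
    have hpr : (p:ℝ) = 2 * k + 1 := by exact_mod_cast congrArg (Nat.cast : ℕ → ℝ) hk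
    have hmr : ((k:ℝ) + 1) ^ n = (((p:ℝ) + 1) / p) ^ n * ((p:ℝ) / 2) ^ n := by
      rw [← mul_pow]
      congr 1
      field_simp
      linarith [hpr]
    have hTr : (T : ℝ) = n * (k:ℝ)^2 + 1 := by rw [hT]; push_cast; ring
    have hmain : (T : ℝ) * (((p:ℝ) / 2) ^ n + 1) ≤ ((k:ℝ) + 1) ^ n := by
      rw [hmr, hTr]
      have h2 : ((n:ℝ) * (k:ℝ)^2 + 1) * (((p:ℝ) / 2) ^ n + 1)
          ≤ (2 * (k:ℝ)^2 * n + 2) * ((p:ℝ) / 2) ^ n := by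
        nlinarith [hpow1, sq_nonneg (k:ℝ), Nat.cast_nonneg (α := ℝ) n,
          mul_nonneg (mul_nonneg (Nat.cast_nonneg (α := ℝ) n) (sq_nonneg (k:ℝ)))
            (sub_nonneg.2 hpow1)]
      refine h2.trans ?_
      have hppos : (0:ℝ) < ((p:ℝ)/2)^n := by positivity
      nlinarith [hexp, hppos]
    have hdivn : (k+1) ^ n < T * (b + 1) := by
      rw [hb]; exact Nat.lt_mul_div_succ _ hTpos
    have hdiv : ((k:ℝ) + 1) ^ n < (T:ℝ) * ((b:ℝ) + 1) := by
      have := (Nat.cast_lt (α := ℝ)).2 hdivn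
      push_cast at this
      convert this using 2
    have hTr0 : (0:ℝ) < T := by exact_mod_cast hTpos
    have hblb : ((p:ℝ) / 2) ^ n < (b : ℝ) := by nlinarith
    calc ((p:ℝ) / 2) ^ n ≤ (b : ℝ) := le_of_lt hblb
      _ ≤ _ := by exact_mod_cast hbf
  · -- freeness
    rintro ⟨x, hxA, hdist, -, heq2⟩
    obtain ⟨a0, ha0, he0⟩ := Finset.mem_image.1 (hxA 0)
    obtain ⟨a2, ha2, he2⟩ := Finset.mem_image.1 (hxA 2)
    obtain ⟨a4, ha4, he4⟩ := Finset.mem_image.1 (hxA 4)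
    rw [Finset.mem_filter] at ha0 ha2 ha4
    have hc : ∀ i : Fin n, ((a0 i : ℕ) : ZMod p) - 2 * ((a2 i : ℕ) : ZMod p)
        + ((a4 i : ℕ) : ZMod p) = 0 := by
      intro i
      have h := congrFun heq2 i
      rw [← he0, ← he2, ← he4] at h
      simpa using h
    have ha02 : a0 = a2 := free_aux hk a0 a2 a4 hc (by rw [ha0.2, ha2.2]) (by rw [ha4.2, ha2.2])
    exact hdist 0 2 (by decide) (by rw [← he0, ← he2, ha02])
end

section
/- Let p ≥ 3 be prime. Any subset A ⊆ 𝔽_p^n with no non-degenerate three-term arithmetic progression (no solution of x_1 − 2x_2 + x_3 = 0 with x_1, x_2, x_3 distinct) satisfies #A ≤ (Λ_{1,1/3,p-1})^n, where Λ_{1,1/3,p-1} = min_{u∈(0,1]} u^{-(p-1)/3}(1 + u + ... + u^{p-1}). Moreover Λ_{1,1/3,p-1} < p. -/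
open Finset

/-!
The polynomial method of Croot–Lev–Pach and Ellenberg–Gijswijt, over any finite field `K` with
`q` elements and `2 ≠ 0`. Let `m_d` be the number of monomials in `n` variables of total degree
at most `d` and degree `< q` in each variable. If `A ⊆ Kⁿ` is 3AP-free, then `a + b` is not of the
form `2c` with `c ∈ A` unless `a = b`, so a polynomial `P` of degree `≤ d` vanishing off `2 • A`
makes `(P (a + b))_{a, b ∈ A}` diagonal. Expanding each monomial of `P (a + b)`, one of the two
factors has degree `≤ d / 2`, so this matrix has rank at most `2 m_{d/2}`; on the other hand such
`P` form a space of dimension `≥ m_d - qⁿ + |A|`, and one of maximal support has at least that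
many nonzero diagonal entries. Since `qⁿ - m_d ≤ m_{(q-1)n-d-1}`, taking `d ≈ 2(q-1)n/3` gives
`|A| ≤ 3 m_{(q-1)n/3}`, and the Chernoff bound `m_D u^D ≤ (1 + u + ⋯ + u^{q-1})ⁿ` together with
the tensor power trick yields `|A| ≤ Λⁿ`. Finally `Λ < q` because `G(1) = q` and `G'(1) > 0`.
-/

open Filter Topology in
theorem exists_lt_of_hasDerivAt_pos {f : ℝ → ℝ} {f' a b : ℝ} (hf : HasDerivAt f f' a)
    (hf' : 0 < f') (hb : b < a) : ∃ u ∈ Set.Ioo b a, f u < f a := by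
  have hslope : Tendsto (slope f a) (𝓝[<] a) (𝓝 f') :=
    (hasDerivAt_iff_tendsto_slope.1 hf).mono_left (nhdsWithin_mono _ fun _ hx => ne_of_lt hx)
  obtain ⟨u, hpos, hu⟩ := ((hslope.eventually (lt_mem_nhds hf')).and (Ioo_mem_nhdsLT hb)).exists
  refine ⟨u, hu, ?_⟩
  rw [slope_def_field, div_pos_iff] at hpos
  rcases hpos with ⟨-, h⟩ | ⟨h, -⟩ <;> linarith [hu.2]

theorem le_of_forall_pow_le_mul_pow {a b C : ℝ} (hb : 0 ≤ b) (h : ∀ k ≥ 1, a ^ k ≤ C * b ^ k) :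
    a ≤ b := by
  by_contra! hba
  rcases hb.eq_or_lt with rfl | hb
  · have := h 1 le_rfl
    simp only [pow_one, mul_zero] at this
    linarith
  have hab : 1 < a / b := (one_lt_div hb).2 hba
  obtain ⟨k, hk⟩ := pow_unbounded_of_one_lt C hab
  have hk' : C * b ^ (k + 1) < a ^ (k + 1) := by
    rw [← lt_div_iff₀ (by positivity), ← div_pow]
    exact hk.trans_le (pow_le_pow_right₀ hab.le k.le_succ)
  exact (h (k + 1) (by omega)).not_gt hk'

section Lam

variable {m : ℕ} {α : ℝ} {h : ℕ}

theorem gfun_nonneg {u : ℝ} (hu : 0 ≤ u) : 0 ≤ Gfun m α h u :=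
  mul_nonneg (Real.rpow_nonneg hu _) (sum_nonneg fun j _ => pow_nonneg hu j)

theorem gfun_one : Gfun m α h 1 = m * h + 1 := by
  simp [Gfun]

theorem hasDerivAt_gfun_one : HasDerivAt (Gfun m α h) ((m * h + 1) * (m * h / 2 - α * h)) 1 := by
  have hpow := Real.hasDerivAt_rpow_const (x := 1) (p := -(α * h)) (Or.inl one_ne_zero)
  have hsum := HasDerivAt.fun_sum fun j (_ : j ∈ range (m * h + 1)) => hasDerivAt_pow j (1 : ℝ)
  have hgauss : ∑ j ∈ range (m * h + 1), (j : ℝ) = m * h * (m * h + 1) / 2 := by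
    have := Finset.sum_range_id_mul_two (m * h + 1)
    rify at this
    push_cast at this
    linarith
  refine (hpow.fun_mul hsum).congr_deriv ?_
  simp only [Real.one_rpow, one_pow, mul_one, sum_const, card_range, nsmul_eq_mul, hgauss]
  push_cast
  ring

theorem lam_lt (hα : α < m / 2) (hh : 0 < h) : Lam m α h < m * h + 1 := by
  have hderiv : 0 < ((m * h + 1) * (m * h / 2 - α * h) : ℝ) := by
    have : (0 : ℝ) < h := by exact_mod_cast hh
    exact mul_pos (by positivity) (by nlinarith)
  obtain ⟨u, hu, hlt⟩ := exists_lt_of_hasDerivAt_pos hasDerivAt_gfun_one hderiv one_pos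
  calc Lam m α h ≤ Gfun m α h u :=
        csInf_le ⟨0, by rintro _ ⟨v, hv, rfl⟩; exact gfun_nonneg hv.1.le⟩ ⟨u, ⟨hu.1, hu.2.le⟩, rfl⟩
    _ < m * h + 1 := hlt.trans_eq gfun_one

theorem le_lam_pow {n : ℕ} {x : ℝ} (hx : ∀ u ∈ Set.Ioc (0 : ℝ) 1, x ≤ Gfun m α h u ^ n) :
    x ≤ Lam m α h ^ n := by
  have hne : (Gfun m α h '' Set.Ioc 0 1).Nonempty := ⟨_, 1, ⟨one_pos, le_rfl⟩, rfl⟩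
  have hLam : 0 ≤ Lam m α h := le_csInf hne (by rintro _ ⟨u, hu, rfl⟩; exact gfun_nonneg hu.1.le)
  rcases Nat.eq_zero_or_pos n with rfl | hn
  · simpa using hx 1 ⟨one_pos, le_rfl⟩
  rcases lt_or_ge x 0 with hx0 | hx0
  · exact hx0.le.trans (pow_nonneg hLam n)
  rw [← Real.rpow_inv_natCast_pow hx0 hn.ne']
  refine pow_le_pow_left₀ (by positivity) (le_csInf hne ?_) n
  rintro _ ⟨u, hu, rfl⟩
  rw [← pow_le_pow_iff_left₀ (by positivity) (gfun_nonneg hu.1.le) hn.ne',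
    Real.rpow_inv_natCast_pow hx0 hn.ne']
  exact hx u hu

end Lam

theorem add_self_injective {K M : Type*} [Field K] [AddCommGroup M] [Module K M]
    (h2 : (2 : K) ≠ 0) : Function.Injective fun a : M => a + a := fun a b h => by
  simpa [← two_smul K, smul_right_injective M h2 |>.eq_iff] using h

theorem threeAPFree_of_not_exists {G : Type*} [AddCommGroup G]
    (hdouble : Function.Injective fun a : G => a + a) {A : Finset G}
    (hA : ¬∃ x : Fin 3 → G, (∀ i, x i ∈ A) ∧ (∀ i j, i ≠ j → x i ≠ x j) ∧
      x 0 - 2 • x 1 + x 2 = 0) :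
    ThreeAPFree (A : Set G) := by
  intro a ha b hb c hc habc
  by_contra hab
  have hbc : b ≠ c := by rintro rfl; exact hab (add_right_cancel habc)
  have hac : a ≠ c := by rintro rfl; exact hab (hdouble habc)
  refine hA ⟨![a, b, c], fun i => ?_, fun i j hij => ?_, ?_⟩
  · fin_cases i <;> assumption
  · fin_cases i <;> fin_cases j <;> simp_all [eq_comm]
  · simp [two_nsmul, ← habc]

section Rank

variable {K T : Type*} [Field K] [Fintype T] {F : T → T → K}

theorem card_le_of_diagonal_eq_sum_mul (hdiag : ∀ a b, a ≠ b → F a b = 0)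
    (hne : ∀ a, F a a ≠ 0) {ι : Type*} (s : Finset ι) (u v : ι → T → K)
    (hF : ∀ a b, F a b = ∑ i ∈ s, u i a * v i b) : Fintype.card T ≤ #s := by
  classical
  have hdiagonal : Matrix.of F = Matrix.diagonal fun a => F a a := by
    ext a b
    by_cases h : a = b
    · simp [h]
    · simp [h, hdiag a b h]
  have hprod : Matrix.of F =
      Matrix.of (fun a (i : s) => u i a) * Matrix.of fun (i : s) b => v i b := by
    ext a b
    simp [Matrix.mul_apply, hF, sum_attach s fun i => u i a * v i b]
  calc Fintype.card T = (Matrix.of F).rank := by simp [hdiagonal, Matrix.rank_diagonal, hne]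
    _ ≤ Fintype.card s :=
      hprod ▸ (Matrix.rank_mul_le_left _ _).trans (Matrix.rank_le_card_width _)
    _ = #s := Fintype.card_coe s

/-- Each term has a factor from a family indexed by `L`; collecting terms by that factor
writes `F` as a sum of `2 |L|` products. -/
theorem card_le_two_mul_of_diagonal_eq_sum (hdiag : ∀ a b, a ≠ b → F a b = 0)
    (hne : ∀ a, F a a ≠ 0) {ι κ : Type*} (s : Finset ι) (c : ι → K) (φ ψ : ι → κ)
    (U V : κ → T → K) (L : Finset κ) (hL : ∀ x ∈ s, φ x ∈ L ∨ ψ x ∈ L)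
    (hF : ∀ a b, F a b = ∑ x ∈ s, c x * U (φ x) a * V (ψ x) b) :
    Fintype.card T ≤ 2 * #L := by
  classical
  have := card_le_of_diagonal_eq_sum_mul hdiag hne (L.disjSum L)
    (Sum.elim U fun g a => ∑ x ∈ s with φ x ∉ L ∧ ψ x = g, c x * U (φ x) a)
    (Sum.elim (fun f b => ∑ x ∈ s with φ x = f, c x * V (ψ x) b) V) fun a b => ?_
  · rwa [card_disjSum, ← two_mul] at this
  rw [sum_disjSum, hF, ← sum_filter_add_sum_filter_not s fun x => φ x ∈ L]
  simp only [Sum.elim_inl, Sum.elim_inr, mul_sum, sum_mul, sum_filter]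
  rw [sum_comm, sum_comm (s := L)]
  congr 1 <;> refine sum_congr rfl fun x hx => ?_
  · simp only [mul_ite, mul_zero, sum_ite_eq]
    split_ifs <;> ring
  · by_cases h : φ x ∈ L
    · simp [h]
    · simp [h, ite_mul, sum_ite_eq, (hL x hx).resolve_left h]

end Rank

/-- A vector of maximal support in `Z` is a witness: restricting `Z` to its support is
injective, since otherwise adding a vector that vanishes there would enlarge the support. -/
theorem exists_mem_finrank_le_card_support {K V : Type*} [Field K] [Fintype K] [DecidableEq K]
    [Fintype V] (Z : Submodule K (V → K)) :
    ∃ f ∈ Z, Module.finrank K Z ≤ #{v | f v ≠ 0} := by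
  classical
  have : Fintype Z := Fintype.ofFinite Z
  obtain ⟨f, -, hmax⟩ := exists_max_image (univ : Finset Z)
    (fun g => #{v | (g : V → K) v ≠ 0}) ⟨0, mem_univ 0⟩
  set T : Finset V := {v | (f : V → K) v ≠ 0}
  have hinj : Function.Injective ((LinearMap.funLeft K K ((↑) : T → V)).comp Z.subtype) := by
    rw [← LinearMap.ker_eq_bot, LinearMap.ker_eq_bot']
    intro g hg
    by_contra hg0
    obtain ⟨v, hv⟩ : ∃ v, (g : V → K) v ≠ 0 := by
      by_contra! h
      exact hg0 (Subtype.ext (funext h))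
    have hgT : ∀ t ∈ T, (g : V → K) t = 0 := fun t ht => congrFun hg ⟨t, ht⟩
    have hvT : v ∉ T := fun h => hv (hgT v h)
    have hsub : insert v T ⊆ ({w | ((f + g : Z) : V → K) w ≠ 0} : Finset V) := by
      intro w hw
      rcases mem_insert.1 hw with rfl | hw
      · have : (f : V → K) w = 0 := by simpa [T] using hvT
        simp [this, hv]
      · simpa [hgT w hw] using (mem_filter.1 hw).2
    have := (card_le_card hsub).trans (hmax (f + g) (mem_univ _))
    rw [card_insert_of_notMem hvT] at this
    omega
  refine ⟨f, f.2, ?_⟩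
  calc Module.finrank K Z ≤ Module.finrank K (T → K) :=
        LinearMap.finrank_le_finrank_of_injective hinj
    _ = #T := by simp

namespace EllenbergGijswijt

section Exponents

variable {σ : Type*} [Fintype σ] [DecidableEq σ]

def reducedExponents (q d : ℕ) : Finset (σ → ℕ) :=
  {e ∈ Fintype.piFinset fun _ => range q | ∑ i, e i ≤ d}

theorem mem_reducedExponents {q d : ℕ} {e : σ → ℕ} :
    e ∈ reducedExponents q d ↔ (∀ i, e i < q) ∧ ∑ i, e i ≤ d := by
  simp [reducedExponents]

theorem sum_piFinset_pow_sum {R : Type*} [CommSemiring R] (q : ℕ) (u : R) :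
    ∑ e ∈ Fintype.piFinset (fun _ : σ => range q), u ^ (∑ i, e i) =
      (∑ j ∈ range q, u ^ j) ^ Fintype.card σ := by
  simp_rw [← prod_pow_eq_pow_sum, ← prod_univ_sum, prod_const, card_univ]

theorem card_reducedExponents_mul_pow_le {u : ℝ} (hu0 : 0 ≤ u) (hu1 : u ≤ 1) (q d : ℕ) :
    #(reducedExponents (σ := σ) q d) * u ^ d ≤ (∑ j ∈ range q, u ^ j) ^ Fintype.card σ := by
  rw [← sum_piFinset_pow_sum, ← nsmul_eq_mul, ← sum_const]
  calc ∑ _e ∈ reducedExponents q d, u ^ d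
      ≤ ∑ e ∈ reducedExponents q d, u ^ (∑ i, e i) :=
        sum_le_sum fun e he => pow_le_pow_of_le_one hu0 hu1 (mem_reducedExponents.1 he).2
    _ ≤ _ := sum_le_sum_of_subset_of_nonneg (filter_subset _ _) fun _ _ _ => by positivity

/-- Exponents of total degree above `d` are mapped by `e ↦ (q - 1) - e` to exponents of
total degree below `(q - 1) |σ| - d`. -/
theorem pow_card_le_card_reducedExponents_add (q d : ℕ) :
    q ^ Fintype.card σ ≤ #(reducedExponents (σ := σ) q d) +
      #(reducedExponents (σ := σ) q ((q - 1) * Fintype.card σ - d - 1)) := by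
  set box := Fintype.piFinset fun _ : σ => range q
  have hbox : #box = q ^ Fintype.card σ := by simp [box]
  have hflip : #{e ∈ box | ¬ ∑ i, e i ≤ d} ≤
      #(reducedExponents (σ := σ) q ((q - 1) * Fintype.card σ - d - 1)) := by
    refine card_le_card_of_injOn (fun e i => q - 1 - e i) (fun e he => ?_) fun e he e' he' h => ?_
    · simp only [coe_filter, Set.mem_ofPred_eq, box, Fintype.mem_piFinset, mem_range] at he
      have hsum : ∑ i, (q - 1 - e i) + ∑ i, e i = (q - 1) * Fintype.card σ := by
        rw [← sum_add_distrib, sum_congr rfl fun i _ => Nat.sub_add_cancel (by grind),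
          sum_const, card_univ, smul_eq_mul, mul_comm]
      rw [mem_coe, mem_reducedExponents]
      dsimp only
      exact ⟨fun i => by grind, by omega⟩
    · simp only [coe_filter, Set.mem_ofPred_eq, box, Fintype.mem_piFinset, mem_range] at he he'
      funext i
      have := congrFun h i
      grind
  rw [← hbox, ← card_filter_add_card_filter_not (fun e : σ → ℕ => ∑ i, e i ≤ d)]
  exact Nat.add_le_add_left hflip _

end Exponents

section Monomials

variable {σ : Type*} [Fintype σ]

def monomialFun {R : Type*} [CommSemiring R] (e : σ → ℕ) (x : σ → R) : R :=
  ∏ i, x i ^ e i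

theorem monomialFun_add [DecidableEq σ] {R : Type*} [CommSemiring R] (e : σ → ℕ)
    (a b : σ → R) :
    monomialFun e (a + b) = ∑ f ∈ Fintype.piFinset fun i => range (e i + 1),
      (∏ i, ((e i).choose (f i) : R)) * monomialFun f a * monomialFun (e - f) b := by
  simp_rw [monomialFun, Pi.add_apply, add_pow, prod_univ_sum, ← prod_mul_distrib]
  refine sum_congr rfl fun f _ => prod_congr rfl fun i _ => ?_
  simp only [Pi.sub_apply]
  ring

/-- A combination of these monomials is a polynomial of degree `< |K|` in each variable, and such
a polynomial vanishing on all of `Kⁿ` is zero. -/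
theorem linearIndependent_monomialFun {K : Type*} [Field K] [Fintype K] (s : Finset (σ → ℕ))
    (hs : ∀ e ∈ s, ∀ i, e i < Fintype.card K) :
    LinearIndependent K fun e : s => monomialFun (R := K) e.1 := by
  classical
  rw [Fintype.linearIndependent_iff]
  intro g hg e₀
  let Q : MvPolynomial σ K :=
    ∑ e : s, MvPolynomial.monomial (Finsupp.equivFunOnFinite.symm e.1) (g e)
  have hQ : Q = 0 := by
    refine MvPolynomial.eq_zero_of_eval_zero_at_prod_finset Q (fun _ => univ) (fun i => ?_)
      fun v _ => ?_
    · rw [card_univ, MvPolynomial.degreeOf_lt_iff Fintype.card_pos]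
      intro t ht
      obtain ⟨e, -, he⟩ := exists_ne_zero_of_sum_ne_zero
        (by simpa [Q, MvPolynomial.coeff_sum] using ht)
      rw [ite_ne_right_iff] at he
      rw [← he.1]
      exact hs e e.2 i
    · simpa [Q, MvPolynomial.eval_monomial, Finsupp.prod_fintype, monomialFun] using congrFun hg v
  have hcoeff : MvPolynomial.coeff (Finsupp.equivFunOnFinite.symm e₀.1) Q = g e₀ := by
    simp only [Q, MvPolynomial.coeff_sum, MvPolynomial.coeff_monomial,
      Finsupp.equivFunOnFinite.symm.injective.eq_iff, Subtype.val_inj, sum_ite_eq', mem_univ,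
      if_true]
  rw [← hcoeff, hQ, MvPolynomial.coeff_zero]

end Monomials

section PolynomialMethod

variable {K : Type*} [Field K] {σ : Type*} [Fintype σ] [DecidableEq σ]

/-- Expanding `P (a + b)` into monomials `a ^ f * b ^ (e - f)`, in each term `f` or `e - f`
has degree at most `d / 2`. -/
theorem card_filter_ne_zero_le [DecidableEq K] {q d : ℕ} {P : (σ → K) → K}
    (hP : P ∈ Submodule.span K (monomialFun '' (reducedExponents (σ := σ) q d : Set (σ → ℕ))))
    (A : Finset (σ → K)) (hA : ∀ a ∈ A, ∀ b ∈ A, a ≠ b → P (a + b) = 0) :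
    #{a ∈ A | P (a + a) ≠ 0} ≤ 2 * #(reducedExponents (σ := σ) q (d / 2)) := by
  obtain ⟨c, hc⟩ := (Submodule.mem_span_image_finset_iff_exists_fun' K).1 hP
  rw [← Fintype.card_coe]
  refine card_le_two_mul_of_diagonal_eq_sum
    (F := fun a b : {a ∈ A | P (a + a) ≠ 0} => P (a + b))
    (fun a b hab => hA a (mem_filter.1 a.2).1 b (mem_filter.1 b.2).1 (Subtype.coe_ne_coe.2 hab))
    (fun a => (mem_filter.1 a.2).2)
    ((reducedExponents q d).sigma fun e => Fintype.piFinset fun i => range (e i + 1))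
    (fun x => c x.1 * ∏ i, ((x.1 i).choose (x.2 i) : K)) (fun x => x.2) (fun x => x.1 - x.2)
    (fun f a => monomialFun f a.1) (fun f b => monomialFun f b.1) _ (fun x hx => ?_)
    fun a b => ?_
  · simp only [mem_sigma, mem_reducedExponents, Fintype.mem_piFinset, mem_range] at hx
    obtain ⟨⟨hq, hd⟩, hle⟩ := hx
    have hsum : ∑ i, x.2 i + ∑ i, (x.1 i - x.2 i) = ∑ i, x.1 i := by
      rw [← sum_add_distrib]
      exact sum_congr rfl fun i _ => by grind
    simp only [mem_reducedExponents, Pi.sub_apply]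
    refine (le_or_gt (∑ i, x.2 i) (d / 2)).imp (fun h => ⟨fun i => ?_, h⟩)
      fun h => ⟨fun i => ?_, by omega⟩ <;> grind
  · simp only [← hc, Finset.sum_apply, Pi.smul_apply, smul_eq_mul, sum_sigma, monomialFun_add,
      mul_sum]
    exact sum_congr rfl fun e _ => sum_congr rfl fun f _ => by ring

/-- Polynomials of degree at most `d` vanishing off `2 • A` form a space of dimension at least
`m_d - (q ^ |σ| - |A|)`, and one of maximal support in it is diagonal on `A`. -/
theorem card_add_card_reducedExponents_le [Fintype K] (h2 : (2 : K) ≠ 0) {A : Finset (σ → K)}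
    (hA : ThreeAPFree (A : Set (σ → K))) (d : ℕ) :
    #A + #(reducedExponents (σ := σ) (Fintype.card K) d) ≤
      2 * #(reducedExponents (σ := σ) (Fintype.card K) (d / 2)) +
        Fintype.card K ^ Fintype.card σ := by
  classical
  set q := Fintype.card K
  have hdouble : Function.Injective fun a : σ → K => a + a := add_self_injective h2
  set B := A.image fun a => a + a
  have hB : ∀ a ∈ A, ∀ b ∈ A, a ≠ b → a + b ∉ B := by
    intro a ha b hb hab hmem
    obtain ⟨c, hc, hcab⟩ := mem_image.1 hmem
    exact hab ((hA ha hc hb hcab.symm).trans (hA hb hc ha (by rw [add_comm, hcab])).symm)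
  set W := Submodule.span K (monomialFun (R := K) '' (reducedExponents (σ := σ) q d : Set (σ → ℕ)))
    with hWdef
  have hW : Module.finrank K W = #(reducedExponents (σ := σ) q d) := by
    rw [hWdef, Set.image_eq_range]
    exact (finrank_span_eq_card (linearIndependent_monomialFun _ fun e he =>
      (mem_reducedExponents.1 he).1)).trans (Fintype.card_coe _)
  set restrict := (LinearMap.funLeft K K ((↑) : {v // v ∉ B} → σ → K)).domRestrict W
  set Z := (LinearMap.ker restrict).map W.subtype
  have hZ : #(reducedExponents (σ := σ) q d) ≤ (q ^ Fintype.card σ - #A) + Module.finrank K Z := by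
    rw [← hW, ← restrict.finrank_range_add_finrank_ker, Submodule.finrank_map_subtype_eq]
    refine Nat.add_le_add_right ((Submodule.finrank_le _).trans ?_) _
    rw [Module.finrank_fintype_fun_eq_card, Fintype.card_subtype_compl, Fintype.card_coe,
      card_image_of_injective A hdouble]
    simp [q]
  obtain ⟨P, hPZ, hPsupp⟩ := exists_mem_finrank_le_card_support Z
  obtain ⟨⟨P, hPW⟩, hPker, rfl⟩ := Submodule.mem_map.1 hPZ
  replace hPsupp : Module.finrank K Z ≤ #{v | P v ≠ 0} := hPsupp
  have hPB : ∀ v ∉ B, P v = 0 := fun v hv => congrFun hPker ⟨v, hv⟩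
  have hsupp : #{v | P v ≠ 0} ≤ #{a ∈ A | P (a + a) ≠ 0} := by
    refine le_trans (card_le_card fun v hv => ?_) (card_image_le (f := fun a => a + a))
    have hPv := (mem_filter.1 hv).2
    obtain ⟨a, ha, rfl⟩ := mem_image.1 (not_imp_comm.1 (hPB v) hPv)
    exact mem_image_of_mem _ (mem_filter.2 ⟨ha, hPv⟩)
  have hdiag := card_filter_ne_zero_le hPW A fun a ha b hb hab => hPB _ (hB a ha b hb hab)
  have hAq : #A ≤ q ^ Fintype.card σ := by
    rw [← card_image_of_injective A hdouble]
    simpa [q] using card_le_univ B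
  omega

end PolynomialMethod

section Bound

variable {K : Type*} [Field K] [Fintype K] {σ : Type*} [Fintype σ]

/-- With `N = (q - 1) |σ|` and `d = ⌊(2N + 1) / 3⌋`, both `d / 2` and `N - d - 1` are at most
`N / 3`, so each of the three terms bounding `|A|` is controlled by the same Chernoff bound. -/
theorem card_mul_pow_le_three_mul (h2 : (2 : K) ≠ 0) {A : Finset (σ → K)}
    (hA : ThreeAPFree (A : Set (σ → K))) {v : ℝ} (hv0 : 0 ≤ v) (hv1 : v ≤ 1) :
    #A * v ^ ((Fintype.card K - 1) * Fintype.card σ) ≤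
      3 * (∑ j ∈ range (Fintype.card K), (v ^ 3) ^ j) ^ Fintype.card σ := by
  classical
  set q := Fintype.card K
  set N := (q - 1) * Fintype.card σ
  set S := (∑ j ∈ range q, (v ^ 3) ^ j) ^ Fintype.card σ
  set d := (2 * N + 1) / 3
  set m : ℕ → ℕ := fun D => #(reducedExponents (σ := σ) q D)
  have hA_le : #A ≤ 2 * m (d / 2) + m (N - d - 1) := by
    have hcore : #A + m d ≤ 2 * m (d / 2) + q ^ Fintype.card σ :=
      card_add_card_reducedExponents_le h2 hA d
    have hcompl : q ^ Fintype.card σ ≤ m d + m (N - d - 1) :=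
      pow_card_le_card_reducedExponents_add q d
    omega
  have hchernoff : ∀ D, 3 * D ≤ N → m D * v ^ N ≤ S := fun D hD =>
    calc m D * v ^ N ≤ m D * (v ^ 3) ^ D := by
          rw [← pow_mul]
          exact mul_le_mul_of_nonneg_left (pow_le_pow_of_le_one hv0 hv1 hD) (by positivity)
      _ ≤ S := card_reducedExponents_mul_pow_le (by positivity) (pow_le_one₀ hv0 hv1) q D
  calc #A * v ^ N ≤ (2 * m (d / 2) + m (N - d - 1) : ℕ) * v ^ N := by gcongr
    _ = 2 * (m (d / 2) * v ^ N) + m (N - d - 1) * v ^ N := by push_cast; ring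
    _ ≤ 2 * S + S := by gcongr <;> exact hchernoff _ (by omega)
    _ = 3 * S := by ring

/-- The tensor power trick: `A^k ⊆ K^(k × σ)` is again 3AP-free, and the `k`-th root of the
constant `3` tends to `1`. -/
theorem card_mul_pow_le (h2 : (2 : K) ≠ 0) {A : Finset (σ → K)}
    (hA : ThreeAPFree (A : Set (σ → K))) {v : ℝ} (hv0 : 0 ≤ v) (hv1 : v ≤ 1) :
    #A * v ^ ((Fintype.card K - 1) * Fintype.card σ) ≤
      (∑ j ∈ range (Fintype.card K), (v ^ 3) ^ j) ^ Fintype.card σ := by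
  classical
  refine le_of_forall_pow_le_mul_pow (C := 3) (by positivity) fun k _ => ?_
  let e := (LinearEquiv.curry K K (Fin k) σ).symm
  set Ak := (Fintype.piFinset fun _ : Fin k => A).image e
  have hcard : #Ak = #A ^ k := by
    rw [card_image_of_injective _ e.injective, Fintype.card_piFinset_const]
  have hAk : ThreeAPFree (Ak : Set (Fin k × σ → K)) := by
    rw [coe_image, Fintype.coe_piFinset]
    exact (threeAPFree_pi fun _ => hA).image' e e.injective.injOn
  have := card_mul_pow_le_three_mul h2 hAk hv0 hv1
  rw [hcard, Fintype.card_prod, Fintype.card_fin] at this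
  convert this using 1 <;> push_cast <;> ring

theorem card_le_lam_pow (h2 : (2 : K) ≠ 0) {A : Finset (σ → K)}
    (hA : ThreeAPFree (A : Set (σ → K))) :
    (#A : ℝ) ≤ Lam 1 (1 / 3) (Fintype.card K - 1) ^ Fintype.card σ := by
  refine le_lam_pow fun u hu => ?_
  set q := Fintype.card K
  set v := u ^ (1 / 3 : ℝ)
  have hv : 0 < v := Real.rpow_pos_of_pos hu.1 _
  have hv3 : v ^ 3 = u := by rw [← Real.rpow_mul_natCast hu.1.le]; norm_num
  have hG : Gfun 1 (1 / 3) (q - 1) u = (v ^ (q - 1))⁻¹ * ∑ j ∈ range q, u ^ j := by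
    rw [Gfun, Real.rpow_neg hu.1.le, Real.rpow_mul_natCast hu.1.le, one_mul,
      Nat.sub_add_cancel Fintype.card_pos]
  have := card_mul_pow_le h2 hA hv.le (Real.rpow_le_one hu.1.le hu.2 (by norm_num))
  rw [hG, mul_pow, inv_pow, ← pow_mul, inv_mul_eq_div, le_div_iff₀ (by positivity), ← hv3]
  exact this

end Bound

end EllenbergGijswijt

/-- Ellenberg–Gijswijt: a subset of `𝔽_p^n` with no non-degenerate three-term arithmetic
progression has size at most `Λ_{1,1/3,p-1}ⁿ`; moreover `Λ_{1,1/3,p-1} < p`. -/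
theorem ellenberg_gijswijt {p n : ℕ} (hp : p.Prime) (hp3 : 3 ≤ p)
    (A : Finset (Fin n → ZMod p))
    (hA : ¬∃ x : Fin 3 → (Fin n → ZMod p), (∀ i, x i ∈ A) ∧
      (∀ i j, i ≠ j → x i ≠ x j) ∧ x 0 - 2 • x 1 + x 2 = 0) :
    (A.card : ℝ) ≤ (Lam 1 (1 / 3) (p - 1)) ^ n ∧ Lam 1 (1 / 3) (p - 1) < p := by
  have := Fact.mk hp
  have h2 : (2 : ZMod p) ≠ 0 := Ring.two_ne_zero (by rw [ZMod.ringChar_zmod_n]; omega)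
  have hA' := threeAPFree_of_not_exists (add_self_injective h2) hA
  refine ⟨by simpa using EllenbergGijswijt.card_le_lam_pow h2 hA', ?_⟩
  calc Lam 1 (1 / 3) (p - 1) < ((1 : ℕ) : ℝ) * ((p - 1 : ℕ) : ℝ) + 1 :=
        lam_lt (by norm_num) (by omega)
    _ = p := by push_cast [Nat.cast_sub hp.one_le]; ring
end

section
/- Let p ≥ 3 be prime and n ∈ ℕ. Every subset A ⊆ 𝔽_p^n containing no four pairwise distinct points x_1, x_2, x_3, x_4 with x_1 − x_2 − x_3 + x_4 = 0 (no non-degenerate parallelogram) satisfies #A ≤ 7(Λ_{1,1/4,p-1}·p)^{n/2}. -/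
open Finset

theorem one_le_Lam (m h : ℕ) : 1 ≤ Lam m (1/4) h := by
  apply le_csInf
  · exact ⟨Gfun m (1/4) h 1, 1, by norm_num, rfl⟩
  · rintro b ⟨u, ⟨hu0, hu1⟩, rfl⟩
    unfold Gfun
    have h1 : (1:ℝ) ≤ u ^ (-((1:ℝ)/4 * h)) :=
      Real.one_le_rpow_of_pos_of_le_one_of_nonpos hu0 hu1
        (neg_nonpos.mpr (by positivity))
    have h2 : (1:ℝ) ≤ ∑ j ∈ Finset.range (m * h + 1), u ^ j := by
      have := Finset.single_le_sum (f := fun j => u ^ j)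
        (fun j _ => by positivity) (Finset.mem_range.mpr (Nat.succ_pos (m * h)))
      simpa using this
    nlinarith

/-- Sidon-type count for weakly parallelogram-free sets. -/
theorem wpf_count {p n : ℕ} (hp : p.Prime)
    (A : Finset (Fin n → ZMod p))
    (hA : ¬∃ x : Fin 4 → (Fin n → ZMod p), (∀ i, x i ∈ A) ∧
      (∀ i j, i ≠ j → x i ≠ x j) ∧ x 0 - x 1 - x 2 + x 3 = 0) :
    A.card * A.card - A.card ≤ 3 * p ^ n := by
  have : Fact p.Prime := ⟨hp⟩
  classical
  have key : ∀ d ∈ A.offDiag.image (fun q => q.1 - q.2),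
      (A.offDiag.filter (fun q => q.1 - q.2 = d)).card ≤ 3 := by
    intro d hd
    set F := A.offDiag.filter (fun q => q.1 - q.2 = d) with hF
    rcases F.eq_empty_or_nonempty with h | ⟨q₀, hq₀⟩
    · simp [h]
    have hdne : d ≠ 0 := by
      rcases Finset.mem_image.mp hd with ⟨q, hq, rfl⟩
      rcases Finset.mem_offDiag.mp hq with ⟨_, _, hne⟩
      simpa [sub_eq_zero] using hne
    have claim : ∀ q ∈ F, ∀ r ∈ F,
        q.1 - r.1 = 0 ∨ q.1 - r.1 = d ∨ q.1 - r.1 = -d := by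
      intro q hq r hr
      obtain ⟨hqA, hqd⟩ := Finset.mem_filter.mp hq
      obtain ⟨hrA, hrd⟩ := Finset.mem_filter.mp hr
      obtain ⟨hq1, hq2, -⟩ := Finset.mem_offDiag.mp hqA
      obtain ⟨hr1, hr2, -⟩ := Finset.mem_offDiag.mp hrA
      have hq2' : q.2 = q.1 - d := by rw [← hqd]; ring
      have hr2' : r.2 = r.1 - d := by rw [← hrd]; ring
      by_contra hcon
      push_neg at hcon
      obtain ⟨h1, h2, h3⟩ := hcon
      have hac : q.1 ≠ r.1 := fun h => h1 (by rw [h, sub_self])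
      have hacd : q.1 ≠ r.1 - d := fun h => h3 (by rw [h]; ring)
      have hcad : r.1 ≠ q.1 - d := fun h => h2 (by rw [h]; ring)
      have hself : ∀ a : Fin n → ZMod p, a ≠ a - d := by
        intro a h
        exact hdne (by linear_combination h)
      have hsub : q.1 - d ≠ r.1 - d := fun h => hac (by
        have := congrArg (· + d) h
        simpa using this)
      apply hA
      refine ⟨![q.1, q.1 - d, r.1, r.1 - d], ?_, ?_, by
        show q.1 - (q.1 - d) - r.1 + (r.1 - d) = 0; ring⟩
      · intro i
        fin_cases i <;> simp only [Matrix.cons_val_zero, Matrix.cons_val_one,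
          Matrix.head_cons, Matrix.cons_val_two, Matrix.tail_cons, Matrix.cons_val_three]
        · exact hq1
        · rw [← hq2']; exact hq2
        · exact hr1
        · rw [← hr2']; exact hr2
      · intro i j hij
        fin_cases i <;> fin_cases j <;>
          first
            | exact absurd rfl hij
            | exact hself q.1
            | exact (hself q.1).symm
            | exact hself r.1
            | exact (hself r.1).symm
            | exact hac
            | exact hac.symm
            | exact hacd
            | exact hacd.symm
            | exact hcad
            | exact hcad.symm
            | exact hsub
            | exact hsub.symm
    have hcard3 : ({0, d, -d} : Finset (Fin n → ZMod p)).card ≤ 3 := by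
      apply le_trans (Finset.card_insert_le _ _)
      have h2 := Finset.card_insert_le d ({-d} : Finset (Fin n → ZMod p))
      simp only [Finset.card_singleton] at h2
      omega
    refine le_trans (Finset.card_le_card_of_injOn (fun q => q.1 - q₀.1) ?_ ?_) hcard3
    · intro q hq
      rcases claim q hq q₀ hq₀ with h | h | h <;> simp [h]
    · intro q hq r hr hqr
      have hfst : q.1 = r.1 := by
        have := congrArg (· + q₀.1) hqr
        simpa using this
      have hq2 : q.2 = q.1 - d := by
        have := (Finset.mem_filter.mp hq).2; rw [← this]; ring
      have hr2 : r.2 = r.1 - d := by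
        have := (Finset.mem_filter.mp hr).2; rw [← this]; ring
      exact Prod.ext hfst (by rw [hq2, hr2, hfst])
  have h1 : A.offDiag.card ≤ 3 * (A.offDiag.image (fun q => q.1 - q.2)).card :=
    Finset.card_le_mul_card_image _ 3 key
  have h2 : (A.offDiag.image (fun q => q.1 - q.2)).card ≤ p ^ n := by
    refine le_trans (Finset.card_le_univ _) ?_
    rw [Fintype.card_fun, ZMod.card, Fintype.card_fin]
  rw [Finset.offDiag_card] at h1
  omega

/-- Upper bound for weakly parallelogram-free sets: if `A ⊆ 𝔽_p^n` (`p ≥ 3` prime)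
contains no four pairwise distinct points with `x₁ − x₂ − x₃ + x₄ = 0`, then
`#A ≤ 7 (√(Λ_{1,1/4,p-1}·p))ⁿ`. -/
theorem weakly_parallelogram_free_upper_bound {p n : ℕ} (hp : p.Prime) (hp3 : 3 ≤ p)
    (A : Finset (Fin n → ZMod p))
    (hA : ¬∃ x : Fin 4 → (Fin n → ZMod p), (∀ i, x i ∈ A) ∧
      (∀ i j, i ≠ j → x i ≠ x j) ∧ x 0 - x 1 - x 2 + x 3 = 0) :
    (A.card : ℝ) ≤ 7 * (Real.sqrt (Lam 1 (1 / 4) (p - 1) * p)) ^ n := by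
  have hcount := wpf_count hp A hA
  set x : ℕ := A.card with hx
  have hxx : x * x ≤ 3 * p ^ n + x := by omega
  have hp0 : (0:ℝ) ≤ p := by positivity
  set s : ℝ := Real.sqrt p with hs
  have hs2 : s ^ 2 = p := Real.sq_sqrt hp0
  have hs1 : (1:ℝ) ≤ s := by
    rw [show (1:ℝ) = Real.sqrt 1 by simp [Real.sqrt_one]]
    exact Real.sqrt_le_sqrt (by exact_mod_cast (by omega : 1 ≤ p))
  set t : ℝ := s ^ n with ht
  have ht1 : (1:ℝ) ≤ t := one_le_pow₀ hs1
  have ht2 : t ^ 2 = (p:ℝ) ^ n := by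
    rw [ht, ← pow_mul, mul_comm n 2, pow_mul, hs2]
  have hreal : (x:ℝ) * x ≤ 3 * t ^ 2 + x := by
    rw [ht2]
    have := (Nat.cast_le (α := ℝ)).mpr hxx
    push_cast at this
    linarith
  have hx7 : (x:ℝ) ≤ 7 * t := by
    nlinarith [sq_nonneg ((x:ℝ) - 7 * t), sq_nonneg ((x:ℝ) + t),
      Nat.cast_nonneg (α := ℝ) x, mul_nonneg (Nat.cast_nonneg (α := ℝ) x) (by linarith : (0:ℝ) ≤ t)]
  refine hx7.trans ?_
  have hLam : 1 ≤ Lam 1 (1/4) (p - 1) := one_le_Lam 1 (p - 1)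
  have hsle : s ≤ Real.sqrt (Lam 1 (1/4) (p - 1) * p) := by
    apply Real.sqrt_le_sqrt
    nlinarith
  have := pow_le_pow_left₀ (Real.sqrt_nonneg (p:ℝ)) hsle n
  norm_num at this ⊢
  linarith
end
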